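/- arXiv:0904.0655 — 5 statements merged into one kernel-verified Lean document; each statement's English description precedes it below -/
import Mathlib

section
/- Let μ, ν : ℝ → ℝ be differentiable with μ'(s) = -ν(s)κ₃(s) and ν'(s) = -μ(s)κ₃(s), where κ₃ is continuous. With t(s) = ∫₀^s κ₃(u) du, there exist constants A, B such that μ(s) = A·cosh(t(s)) + B·sinh(t(s)) and ν(s) = -(A·sinh(t(s)) + B·cosh(t(s))) for all s. -/
lemma exp_ode (f c : ℝ → ℝ) (hf : Differentiable ℝ f) (hc : Continuous c)
    (h : ∀ s, deriv f s = c s * f s) :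
    ∀ s, f s = f 0 * Real.exp (∫ u in (0:ℝ)..s, c u) := by
  set t : ℝ → ℝ := fun s => ∫ u in (0:ℝ)..s, c u with htdef
  have ht : ∀ s, HasDerivAt t (c s) s := fun s =>
    intervalIntegral.integral_hasDerivAt_right (hc.intervalIntegrable _ _)
      (hc.stronglyMeasurableAtFilter _ _) hc.continuousAt
  have hg : ∀ s, HasDerivAt (fun s => f s * Real.exp (-t s)) 0 s := by
    intro s
    have hE : HasDerivAt (fun s => Real.exp (-t s)) (Real.exp (-t s) * (-c s)) s :=
      ((ht s).neg).exp
    have := ((hf s).hasDerivAt.mul hE)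
    rw [show (0:ℝ) = deriv f s * Real.exp (-t s) + f s * (Real.exp (-t s) * -c s) by rw [h s]; ring]
    exact this
  have hconst : ∀ s, f s * Real.exp (-t s) = f 0 * Real.exp (-t 0) := by
    intro s
    exact is_const_of_deriv_eq_zero (fun x => (hg x).differentiableAt)
      (fun x => (hg x).deriv) s 0
  intro s
  have h0 : t 0 = 0 := by simp [htdef]
  have := hconst s
  rw [h0, neg_zero, Real.exp_zero, mul_one] at this
  have hpos : Real.exp (-t s) ≠ 0 := (Real.exp_pos _).ne'
  have : f s = f 0 * Real.exp (t s) := by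
    field_simp [Real.exp_neg] at this ⊢
    have e : Real.exp (-t s) * Real.exp (t s) = 1 := by rw [← Real.exp_add]; simp
    linear_combination (-(f s)) * e + Real.exp (t s) * this
  exact this

theorem stmt_3 (μ ν κ₃ : ℝ → ℝ) (hμ : Differentiable ℝ μ)
    (hν : Differentiable ℝ ν) (hκ : Continuous κ₃)
    (h1 : ∀ s : ℝ, deriv μ s = -(ν s * κ₃ s))
    (h2 : ∀ s : ℝ, deriv ν s = -(μ s * κ₃ s)) :
    ∃ A B : ℝ, ∀ s : ℝ,
      μ s = A * Real.cosh (∫ u in (0:ℝ)..s, κ₃ u)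
          + B * Real.sinh (∫ u in (0:ℝ)..s, κ₃ u) ∧
      ν s = -(A * Real.sinh (∫ u in (0:ℝ)..s, κ₃ u)
          + B * Real.cosh (∫ u in (0:ℝ)..s, κ₃ u)) := by
  have hf : ∀ s, (μ + ν) s = (μ + ν) 0 * Real.exp (∫ u in (0:ℝ)..s, (-κ₃) u) := by
    apply exp_ode _ _ (hμ.add hν) hκ.neg
    intro s
    rw [deriv_add (hμ s) (hν s), h1 s, h2 s]
    simp; ring
  have hg : ∀ s, (μ - ν) s = (μ - ν) 0 * Real.exp (∫ u in (0:ℝ)..s, κ₃ u) := by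
    apply exp_ode _ _ (hμ.sub hν) hκ
    intro s
    rw [deriv_sub (hμ s) (hν s), h1 s, h2 s]
    simp; ring
  refine ⟨μ 0, -ν 0, fun s => ?_⟩
  have e1 := hf s
  have e2 := hg s
  simp only [Pi.add_apply, Pi.sub_apply, Pi.neg_apply] at e1 e2
  rw [intervalIntegral.integral_neg, Real.exp_neg] at e1
  set T := ∫ u in (0:ℝ)..s, κ₃ u
  rw [Real.cosh_eq, Real.sinh_eq]
  have hpos : Real.exp T > 0 := Real.exp_pos _
  have hinv : Real.exp T * (Real.exp T)⁻¹ = 1 := mul_inv_cancel₀ hpos.ne'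
  rw [Real.exp_neg] at *
  constructor <;> nlinarith [e1, e2, hinv]
end

section
/- Let g be the Minkowski form on ℝ⁴ and α : ℝ → ℝ⁴ a smooth curve with g(α'(s), α'(s)) = 1 for all s, and let N(s) be proportional to α''(s) with α''(s) = κ₁(s)N(s), κ₁(s) > 0. If g(α(s), α(s)) = s² + c₁s + c₂ for constants c₁, c₂, then g(α(s), N(s)) = 0 for all s. -/
/-- The Minkowski bilinear form on ℝ⁴. -/
def g (v w : Fin 4 → ℝ) : ℝ :=
  -(v 0 * w 0) + v 1 * w 1 + v 2 * w 2 + v 3 * w 3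

lemma g_hasDerivAt {f h : ℝ → Fin 4 → ℝ} {f' h' : Fin 4 → ℝ} {x : ℝ}
    (hf : HasDerivAt f f' x) (hh : HasDerivAt h h' x) :
    HasDerivAt (fun s => g (f s) (h s)) (g f' (h x) + g (f x) h') x := by
  have hfi := hasDerivAt_pi.mp hf
  have hhi := hasDerivAt_pi.mp hh
  have := ((((hfi 0).mul (hhi 0)).neg.add ((hfi 1).mul (hhi 1))).add
    ((hfi 2).mul (hhi 2))).add ((hfi 3).mul (hhi 3))
  convert this using 1
  · rfl
  · rfl
  · funext s; simp [g]
  simp [g]; ring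

theorem stmt_6 (α N : ℝ → Fin 4 → ℝ) (κ₁ : ℝ → ℝ) (c₁ c₂ : ℝ)
    (hα : ContDiff ℝ (⊤ : ℕ∞) α)
    (hunit : ∀ s, g (deriv α s) (deriv α s) = 1)
    (hκpos : ∀ s, 0 < κ₁ s)
    (hN : ∀ s, deriv (deriv α) s = κ₁ s • N s)
    (hdist : ∀ s, g (α s) (α s) = s ^ 2 + c₁ * s + c₂) :
    ∀ s, g (α s) (N s) = 0 := by
  have hα' : Differentiable ℝ (deriv α) :=
    ((contDiff_infty_iff_deriv.mp (hα.of_le (by simp))).2).differentiable (by simp)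
  have hd : ∀ s, HasDerivAt α (deriv α s) s :=
    fun s => (hα.differentiable (by simp) s).hasDerivAt
  have hd2 : ∀ s, HasDerivAt (deriv α) (deriv (deriv α) s) s :=
    fun s => (hα' s).hasDerivAt
  -- F s = g (α s) (α s)
  have hF : ∀ s, HasDerivAt (fun s => g (α s) (α s))
      (2 * g (α s) (deriv α s)) s := by
    intro s
    have := g_hasDerivAt (hd s) (hd s)
    convert this using 1
    simp [g]; ring
  have hFpoly : ∀ s, HasDerivAt (fun s => g (α s) (α s)) (2 * s + c₁) s := by
    intro s
    have : (fun s => g (α s) (α s)) = fun s => s ^ 2 + c₁ * s + c₂ :=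
      funext hdist
    rw [this]
    have h1 : HasDerivAt (fun s : ℝ => s ^ 2 + c₁ * s + c₂) (2 * s + c₁) s := by
      have := (((hasDerivAt_pow 2 s).add ((hasDerivAt_id s).const_mul c₁)).add_const c₂)
      convert this using 1
      · rfl
      · rfl
      · funext x; simp
      norm_num
    exact h1
  have hG : ∀ s, g (α s) (deriv α s) = s + c₁ / 2 := by
    intro s
    have := (hF s).unique (hFpoly s)
    linarith
  -- differentiate G
  intro s
  have hGd : HasDerivAt (fun s => g (α s) (deriv α s))
      (g (deriv α s) (deriv α s) + g (α s) (deriv (deriv α) s)) s :=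
    g_hasDerivAt (hd s) (hd2 s)
  have hGd2 : HasDerivAt (fun s => g (α s) (deriv α s)) 1 s := by
    have : (fun s => g (α s) (deriv α s)) = fun s => s + c₁ / 2 := funext hG
    rw [this]
    simpa using (hasDerivAt_id s).add_const (c₁ / 2)
  have key := hGd.unique hGd2
  rw [hunit s, hN s] at key
  have hsmul : g (α s) (κ₁ s • N s) = κ₁ s * g (α s) (N s) := by
    simp [g, Pi.smul_apply, smul_eq_mul]; ring
  rw [hsmul] at key
  have : κ₁ s * g (α s) (N s) = 0 := by linarith
  exact (mul_eq_zero.mp this).resolve_left (ne_of_gt (hκpos s))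
end

section
/- Let g be the Minkowski form on ℝ⁴ and α : ℝ → ℝ⁴ smooth with g(α', α') = 1 and α'' = κ₁N with κ₁ > 0. Suppose g(α(s),α(s)) - g(α(s),α'(s))² is constant while g(α(s),α(s)) is non-constant on every subinterval. Then g(α(s), N(s)) = 0 for all s. -/
lemma hasDerivAt_g {A B : ℝ → Fin 4 → ℝ} {A' B' : Fin 4 → ℝ} {s : ℝ}
    (hA : HasDerivAt A A' s) (hB : HasDerivAt B B' s) :
    HasDerivAt (fun t => g (A t) (B t)) (g A' (B s) + g (A s) B') s := by
  have hAi : ∀ i, HasDerivAt (fun t => A t i) (A' i) s := hasDerivAt_pi.1 hA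
  have hBi : ∀ i, HasDerivAt (fun t => B t i) (B' i) s := hasDerivAt_pi.1 hB
  have h := ((((hAi 0).mul (hBi 0)).neg.add ((hAi 1).mul (hBi 1))).add
      ((hAi 2).mul (hBi 2))).add ((hAi 3).mul (hBi 3))
  exact h.congr_deriv (by unfold g; ring)

lemma continuous_g {A B : ℝ → Fin 4 → ℝ} (hA : Continuous A) (hB : Continuous B) :
    Continuous (fun t => g (A t) (B t)) := by
  unfold g
  fun_prop

theorem stmt_8 (α N : ℝ → Fin 4 → ℝ) (κ₁ : ℝ → ℝ)
    (hα : ContDiff ℝ (⊤ : ℕ∞) α)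
    (hunit : ∀ s, g (deriv α s) (deriv α s) = 1)
    (hκpos : ∀ s, 0 < κ₁ s)
    (hN : ∀ s, deriv (deriv α) s = κ₁ s • N s)
    (hconst : ∃ C : ℝ, ∀ s, g (α s) (α s) - (g (α s) (deriv α s)) ^ 2 = C)
    (hnonconst : ∀ a b : ℝ, a < b →
      ¬ ∃ C : ℝ, ∀ s ∈ Set.Ioo a b, g (α s) (α s) = C) :
    ∀ s, g (α s) (N s) = 0 := by
  -- basic differentiability facts
  have hα' : ContDiff ℝ ((⊤ : ℕ∞) : WithTop ℕ∞) α := hα.of_le (by simp)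
  have hdα : Differentiable ℝ α := hα'.differentiable (by simp)
  have hTcd : ContDiff ℝ ((⊤ : ℕ∞) : WithTop ℕ∞) (deriv α) := (contDiff_infty_iff_deriv.1 hα').2
  have hdT : Differentiable ℝ (deriv α) := hTcd.differentiable (by simp)
  have hA2cont : Continuous (deriv (deriv α)) :=
    ((contDiff_infty_iff_deriv.1 hTcd).2).continuous
  have hαD : ∀ s, HasDerivAt α (deriv α s) s := fun s => (hdα s).hasDerivAt
  have hTD : ∀ s, HasDerivAt (deriv α) (deriv (deriv α) s) s := fun s => (hdT s).hasDerivAt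
  set h : ℝ → ℝ := fun s => g (α s) (deriv α s) with hh
  set u : ℝ → ℝ := fun s => g (α s) (deriv (deriv α) s) with hu
  -- key pointwise identity : h s * u s = 0
  have key : ∀ s, h s * u s = 0 := by
    intro s
    obtain ⟨C, hC⟩ := hconst
    have hFD : HasDerivAt (fun t => g (α t) (α t) - (g (α t) (deriv α t)) ^ 2)
        ((g (deriv α s) (α s) + g (α s) (deriv α s)) -
          2 * h s * (g (deriv α s) (deriv α s) + g (α s) (deriv (deriv α) s))) s := by
      have h1 := hasDerivAt_g (hαD s) (hαD s)
      have h2 := (hasDerivAt_g (hαD s) (hTD s)).pow 2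
      have := h1.sub h2
      exact this.congr_deriv (by ring)
    have hFC : HasDerivAt (fun t => g (α t) (α t) - (g (α t) (deriv α t)) ^ 2) 0 s := by
      have : (fun t => g (α t) (α t) - (g (α t) (deriv α t)) ^ 2) = fun _ => C :=
        funext hC
      rw [this]; exact hasDerivAt_const s C
    have heq := hFD.unique hFC
    have hsym : g (deriv α s) (α s) = h s := by simp only [hh]; unfold g; ring
    rw [hsym, hunit s] at heq
    have : h s + h s - 2 * h s * (1 + u s) = 0 := by
      simpa [hh, hu] using heq
    nlinarith [this]
  -- now the main argument
  intro s₀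
  by_contra hne
  have hus₀ : u s₀ ≠ 0 := by
    have : u s₀ = κ₁ s₀ * g (α s₀) (N s₀) := by
      simp only [hu, hN s₀]
      unfold g
      simp [Pi.smul_apply, smul_eq_mul]
      ring
    rw [this]
    exact mul_ne_zero (ne_of_gt (hκpos s₀)) hne
  have hucont : Continuous u := continuous_g hdα.continuous hA2cont
  have : ∀ᶠ s in nhds s₀, u s ≠ 0 :=
    hucont.continuousAt.eventually_ne hus₀
  obtain ⟨ε, hεpos, hε⟩ := Metric.eventually_nhds_iff_ball.1 this
  apply hnonconst (s₀ - ε) (s₀ + ε) (by linarith)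
  refine ⟨g (α s₀) (α s₀), fun s hs => ?_⟩
  -- h = 0 on the ball
  have hzero : ∀ t ∈ Set.Ioo (s₀ - ε) (s₀ + ε), h t = 0 := by
    intro t ht
    have htb : t ∈ Metric.ball s₀ ε := by
      rw [Metric.mem_ball, Real.dist_eq, abs_lt]
      constructor <;> [linarith [ht.1]; linarith [ht.2]]
    have := key t
    rcases mul_eq_zero.1 this with h0 | h0
    · exact h0
    · exact absurd h0 (hε t htb)
  -- f := g(α,α) has derivative 2h, zero on the ball
  have hfD : ∀ t, HasDerivAt (fun r => g (α r) (α r)) (2 * h t) t := by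
    intro t
    have := hasDerivAt_g (hαD t) (hαD t)
    convert this using 1
    have : g (deriv α t) (α t) = h t := by simp only [hh]; unfold g; ring
    rw [this]; ring
  have hfcont : Continuous (fun r => g (α r) (α r)) :=
    continuous_g hdα.continuous hdα.continuous
  -- constancy on any subsegment of the ball
  have hconst2 : ∀ a b : ℝ, s₀ - ε < a → b < s₀ + ε → a ≤ b →
      g (α b) (α b) = g (α a) (α a) := by
    intro a b ha hb hab
    have := constant_of_has_deriv_right_zero (f := fun r => g (α r) (α r)) (a := a) (b := b)
      (hfcont.continuousOn)
      (fun x hx => by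
        have hx' : x ∈ Set.Ioo (s₀ - ε) (s₀ + ε) :=
          ⟨lt_of_lt_of_le ha hx.1, lt_trans hx.2 hb⟩
        have := hfD x
        rw [hzero x hx', mul_zero] at this
        exact this.hasDerivWithinAt)
    exact this b ⟨hab, le_refl b⟩
  rcases le_total s s₀ with hle | hle
  · exact (hconst2 s s₀ hs.1 (by linarith) hle).symm
  · exact hconst2 s₀ s (by linarith) hs.2 hle
end

section
/- Let I be an interval and let ρ : I → (0,∞) be of the form ρ(t) = a / sin(t + t₀) with a ≠ 0. Then ρ satisfies (ρ'/v)' - ρ/v = 0 on I, where v(t) = √(ρ'(t)² + ρ(t)²). -/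
theorem stmt_10 (a t₀ : ℝ) (ha : a ≠ 0)
    (ρ : ℝ → ℝ) (hρ : ∀ t, ρ t = a / Real.sin (t + t₀))
    (v : ℝ → ℝ) (hv : ∀ t, v t = Real.sqrt ((deriv ρ t) ^ 2 + (ρ t) ^ 2)) :
    ∀ t : ℝ, 0 < ρ t → Real.sin (t + t₀) ≠ 0 →
      deriv (fun u => deriv ρ u / v u) t - ρ t / v t = 0 := by
  have hρf : ρ = fun t => a / Real.sin (t + t₀) := funext hρ
  subst hρf
  intro t hpos hst
  -- derivative of ρ at points where sin ≠ 0
  have hd : ∀ u : ℝ, Real.sin (u + t₀) ≠ 0 →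
      HasDerivAt (fun t => a / Real.sin (t + t₀))
        (-(a * Real.cos (u + t₀)) / Real.sin (u + t₀) ^ 2) u := by
    intro u hu
    have hs : HasDerivAt (fun t => Real.sin (t + t₀)) (Real.cos (u + t₀)) u := by
      simpa [Function.comp_def] using (Real.hasDerivAt_sin (u + t₀)).comp u ((hasDerivAt_id u).add_const t₀)
    have := (hasDerivAt_const u a).div hs hu
    refine this.congr_deriv ?_
    ring
  have hderiv : ∀ u : ℝ, Real.sin (u + t₀) ≠ 0 →
      deriv (fun t => a / Real.sin (t + t₀)) u
        = -(a * Real.cos (u + t₀)) / Real.sin (u + t₀) ^ 2 := fun u hu => (hd u hu).deriv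
  -- value of v
  have hval : ∀ u : ℝ, Real.sin (u + t₀) ≠ 0 → v u = |a| / Real.sin (u + t₀) ^ 2 := by
    intro u hu
    rw [hv u, hderiv u hu]
    have harg : (-(a * Real.cos (u + t₀)) / Real.sin (u + t₀) ^ 2) ^ 2
        + (a / Real.sin (u + t₀)) ^ 2 = (a / Real.sin (u + t₀) ^ 2) ^ 2 := by
      have h1 : Real.sin (u + t₀) ^ 2 + Real.cos (u + t₀) ^ 2 = 1 :=
        Real.sin_sq_add_cos_sq _
      field_simp
      linear_combination h1
    rw [harg, Real.sqrt_sq_eq_abs, abs_div]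
    congr 1
    exact abs_of_pos (by positivity)
  -- quotient function equals -(a/|a|) * cos near t
  have hne : ∀ᶠ u in nhds t, Real.sin (u + t₀) ≠ 0 := by
    have hc : ContinuousAt (fun u => Real.sin (u + t₀)) t := by fun_prop
    exact hc.eventually_ne hst
  have hgeq : (fun u => deriv (fun t => a / Real.sin (t + t₀)) u / v u)
      =ᶠ[nhds t] fun u => -(a / |a|) * Real.cos (u + t₀) := by
    filter_upwards [hne] with u hu
    rw [hderiv u hu, hval u hu]
    have h2 : Real.sin (u + t₀) ^ 2 ≠ 0 := pow_ne_zero _ hu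
    have h3 : |a| ≠ 0 := abs_ne_zero.mpr ha
    field_simp
  have hcos : HasDerivAt (fun u => -(a / |a|) * Real.cos (u + t₀))
      (a / |a| * Real.sin (t + t₀)) t := by
    have hc : HasDerivAt (fun u => Real.cos (u + t₀)) (-Real.sin (t + t₀)) t := by
      simpa [Function.comp_def] using (Real.hasDerivAt_cos (t + t₀)).comp t ((hasDerivAt_id t).add_const t₀)
    have := hc.const_mul (-(a / |a|))
    refine this.congr_deriv ?_
    ring
  rw [hgeq.deriv_eq, hcos.deriv, hval t hst]
  have h3 : |a| ≠ 0 := abs_ne_zero.mpr ha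
  field_simp
  ring
end

section
/- Let g be the Minkowski form on ℝ⁴, let c ∈ ℝ, let κ₃ : ℝ → ℝ be continuous with antiderivative K(s) = ∫₀^s κ₃, and suppose α : ℝ → ℝ⁴ is smooth with Frenet frame T, N, B₁, B₂ satisfying the Frenet equations T' = κ₁N, N' = -κ₁T + κ₂B₁, B₁' = -εκ₂N + κ₃B₂, B₂' = κ₃B₁ with α' = T, and suppose κ₁(s)(s+c)/κ₂(s) = ε(A·cosh K(s) + B·sinh K(s)) for constants A, B. Then the vector X(s) = α(s) - (s+c)T(s) - (A·cosh K(s) + B·sinh K(s))B₁(s) + (A·sinh K(s) + B·cosh K(s))B₂(s) is constant. -/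
theorem stmt_14 (α T N B₁ B₂ : ℝ → Fin 4 → ℝ) (κ₁ κ₂ κ₃ : ℝ → ℝ)
    (ε c A B : ℝ) (hε : ε = 1 ∨ ε = -1)
    (hκ₃ : Continuous κ₃)
    (hκ₂ne : ∀ s, κ₂ s ≠ 0)
    (hT : Differentiable ℝ T) (hB₁ : Differentiable ℝ B₁)
    (hB₂ : Differentiable ℝ B₂) (hα : Differentiable ℝ α)
    (hαT : ∀ s, deriv α s = T s)
    (hT' : ∀ s, deriv T s = κ₁ s • N s)
    (hB₁' : ∀ s, deriv B₁ s = (-(ε * κ₂ s)) • N s + κ₃ s • B₂ s)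
    (hB₂' : ∀ s, deriv B₂ s = κ₃ s • B₁ s)
    (hratio : ∀ s, κ₁ s * (s + c) / κ₂ s
      = ε * (A * Real.cosh (∫ u in (0:ℝ)..s, κ₃ u)
           + B * Real.sinh (∫ u in (0:ℝ)..s, κ₃ u))) :
    ∃ X₀ : Fin 4 → ℝ, ∀ s : ℝ,
      α s - (s + c) • T s
        - (A * Real.cosh (∫ u in (0:ℝ)..s, κ₃ u)
           + B * Real.sinh (∫ u in (0:ℝ)..s, κ₃ u)) • B₁ s
        + (A * Real.sinh (∫ u in (0:ℝ)..s, κ₃ u)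
           + B * Real.cosh (∫ u in (0:ℝ)..s, κ₃ u)) • B₂ s = X₀ := by
  set K : ℝ → ℝ := fun s => ∫ u in (0:ℝ)..s, κ₃ u with hKdef
  have hKd : ∀ s, HasDerivAt K (κ₃ s) s := fun s =>
    intervalIntegral.integral_hasDerivAt_right (hκ₃.intervalIntegrable 0 s)
      (hκ₃.stronglyMeasurableAtFilter _ _) hκ₃.continuousAt
  set M : ℝ → ℝ := fun s => A * Real.cosh (K s) + B * Real.sinh (K s) with hMdef
  set P : ℝ → ℝ := fun s => A * Real.sinh (K s) + B * Real.cosh (K s) with hPdef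
  have hMd : ∀ s, HasDerivAt M (κ₃ s * P s) s := by
    intro s
    have h1 := (Real.hasDerivAt_cosh (K s)).comp s (hKd s)
    have h2 := (Real.hasDerivAt_sinh (K s)).comp s (hKd s)
    have := (h1.const_mul A).add (h2.const_mul B)
    refine this.congr_deriv (Eq.symm ?_)
    simp [hPdef, Function.comp]
    ring
  have hPd : ∀ s, HasDerivAt P (κ₃ s * M s) s := by
    intro s
    have h1 := (Real.hasDerivAt_sinh (K s)).comp s (hKd s)
    have h2 := (Real.hasDerivAt_cosh (K s)).comp s (hKd s)
    have := (h1.const_mul A).add (h2.const_mul B)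
    refine this.congr_deriv (Eq.symm ?_)
    simp [hMdef, Function.comp]
    ring
  set F : ℝ → Fin 4 → ℝ := fun s => α s - (s + c) • T s - M s • B₁ s + P s • B₂ s
    with hFdef
  have hFd : ∀ s, HasDerivAt F 0 s := by
    intro s
    have hαd : HasDerivAt α (T s) s := hαT s ▸ (hα s).hasDerivAt
    have hTd : HasDerivAt T (κ₁ s • N s) s := hT' s ▸ (hT s).hasDerivAt
    have hB₁d : HasDerivAt B₁ ((-(ε * κ₂ s)) • N s + κ₃ s • B₂ s) s :=
      hB₁' s ▸ (hB₁ s).hasDerivAt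
    have hB₂d : HasDerivAt B₂ (κ₃ s • B₁ s) s := hB₂' s ▸ (hB₂ s).hasDerivAt
    have hsc : HasDerivAt (fun s : ℝ => s + c) 1 s := (hasDerivAt_id s).add_const c
    have h1 : HasDerivAt (fun s => (s + c) • T s)
        ((s + c) • (κ₁ s • N s) + (1 : ℝ) • T s) s := hsc.smul hTd
    have h2 : HasDerivAt (fun s => M s • B₁ s)
        (M s • ((-(ε * κ₂ s)) • N s + κ₃ s • B₂ s) + (κ₃ s * P s) • B₁ s) s :=
      (hMd s).smul hB₁d
    have h3 : HasDerivAt (fun s => P s • B₂ s)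
        (P s • (κ₃ s • B₁ s) + (κ₃ s * M s) • B₂ s) s := (hPd s).smul hB₂d
    have hsum := ((hαd.sub h1).sub h2).add h3
    have hratio' : κ₁ s * (s + c) = ε * κ₂ s * M s := by
      have h := hratio s
      rw [div_eq_iff (hκ₂ne s)] at h
      rw [h, hMdef]; ring
    refine hsum.congr_deriv (Eq.symm ?_)
    funext i
    simp only [Pi.add_apply, Pi.sub_apply, Pi.smul_apply, smul_eq_mul, Pi.zero_apply]
    have hM0 : M s = A * Real.cosh (K s) + B * Real.sinh (K s) := rfl
    linear_combination (N s i) * hratio'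
  refine ⟨F 0, fun s => ?_⟩
  show F s = F 0
  exact is_const_of_deriv_eq_zero (fun x => (hFd x).differentiableAt)
    (fun x => (hFd x).deriv) s 0
end
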